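/- Assume 0 < ra < 1/(2s₂), assume the points x_i (defined by x₀ = 1/2 + ra, x₁ = (s₂+2rs₂a)(1/2 + 1/(2s₂) − x₀), x_{i+1} = (s₁+2rs₁a)(x_i − 1/2 + 1/(2s₁)) for i ≥ 1) satisfy x_i ∈ [1/2 − 1/(2s₁), 1/2) for i = 1, …, m−1 and x_m = 1/2 − 1/(2s₁). Let λ be a real number with λ ≠ 1/2, λ·s₁·(1+2ra) ≠ 1, and φ(λ) = 1, where φ(λ) = λ^m · s₁^(m−1) · s₂ · (1+2ra)^m · (λ(1+2ra) − 1) · (s₂(2λ−1)(λ s₁(1+2ra) − 1) − s₁). Define α_m = 1, α_{m−j} = (λ s₁ (1+2ra))^j for j = 1, …, m−1, α₀ = (λ^m s₁^(m−1) (1+2ra)^m (λ s₁ s₂ (1+2ra) − s₁ s₂) + 1)/(λ s₁ (1+2ra) − 1), c = α₀/(s₂(2λ−1)), and h = c + α₀·1_{I₀} + Σ_{i=1}^m α_i·1_{I_i}. Then (P_a h)(x) = λ·h(x) for almost every x ∈ [0,1]. -/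
import Mathlib


open MeasureTheory

/-- The orbit of the point 1/2 + ra under the perturbed W-shaped map W_a. -/
noncomputable def orbitW (s₁ s₂ r a : ℝ) : ℕ → ℝ
  | 0 => 1 / 2 + r * a
  | 1 => (s₂ + 2 * r * s₂ * a) * (1 / 2 + 1 / (2 * s₂) - (1 / 2 + r * a))
  | (n + 2) => (s₁ + 2 * r * s₁ * a) * (orbitW s₁ s₂ r a (n + 1) - 1 / 2 + 1 / (2 * s₁))

/-- The Perron–Frobenius operator P_a of the map W_a. -/
noncomputable def Pa (s₁ s₂ r a : ℝ) (f : ℝ → ℝ) (x : ℝ) : ℝ :=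
  (1 / (2 * s₂)) * f ((1 - x) / (2 * s₂)) +
  (1 / (s₁ + 2 * r * s₁ * a)) * f (x / (s₁ + 2 * r * s₁ * a) + 1 / 2 - 1 / (2 * s₁)) *
    (Set.Icc (0 : ℝ) (1 / 2 + r * a)).indicator (fun _ => (1 : ℝ)) x +
  (1 / (s₂ + 2 * r * s₂ * a)) * f (1 / 2 + 1 / (2 * s₂) - x / (s₂ + 2 * r * s₂ * a)) *
    (Set.Icc (0 : ℝ) (1 / 2 + r * a)).indicator (fun _ => (1 : ℝ)) x +
  (1 / (2 * s₁)) * f ((x - 1) / (2 * s₁) + 1)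

/-- The auxiliary function φ from the paper. -/
noncomputable def phi (s₁ s₂ r a : ℝ) (m : ℕ) (l : ℝ) : ℝ :=
  l ^ m * s₁ ^ (m - 1) * s₂ * (1 + 2 * r * a) ^ m * (l * (1 + 2 * r * a) - 1) *
    (s₂ * (2 * l - 1) * (l * s₁ * (1 + 2 * r * a) - 1) - s₁)

set_option maxHeartbeats 2000000 in
theorem stmt_16 (s₁ s₂ r a : ℝ) (hs₁ : 1 < s₁) (hs₂ : 1 < s₂)
    (hsum : 1 / s₁ + 1 / s₂ = 1) (hr : 0 < r) (ha : 0 < a)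
    (hra : r * a < 1 / (2 * s₂)) (m : ℕ) (hm : 1 ≤ m)
    (horbit : ∀ i : ℕ, 1 ≤ i → i ≤ m - 1 →
      orbitW s₁ s₂ r a i ∈ Set.Ico (1 / 2 - 1 / (2 * s₁)) (1 / 2))
    (horbitm : orbitW s₁ s₂ r a m = 1 / 2 - 1 / (2 * s₁))
    (l : ℝ) (hl : l ≠ 1 / 2) (hl' : l * s₁ * (1 + 2 * r * a) ≠ 1)
    (hphi : phi s₁ s₂ r a m l = 1) :
    ∀ᵐ x ∂(volume.restrict (Set.Icc (0 : ℝ) 1)),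
      Pa s₁ s₂ r a
        (fun y =>
          ((l ^ m * s₁ ^ (m - 1) * (1 + 2 * r * a) ^ m *
                (l * s₁ * s₂ * (1 + 2 * r * a) - s₁ * s₂) + 1) /
              (l * s₁ * (1 + 2 * r * a) - 1)) / (s₂ * (2 * l - 1)) +
          ((l ^ m * s₁ ^ (m - 1) * (1 + 2 * r * a) ^ m *
                (l * s₁ * s₂ * (1 + 2 * r * a) - s₁ * s₂) + 1) /
              (l * s₁ * (1 + 2 * r * a) - 1)) *
            (Set.Icc (0 : ℝ) (1 / 2 + r * a)).indicator (fun _ => (1 : ℝ)) y +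
          ∑ i ∈ Finset.Icc 1 m, (l * s₁ * (1 + 2 * r * a)) ^ (m - i) *
            (Set.Icc (orbitW s₁ s₂ r a i) (1 / 2 + r * a)).indicator
              (fun _ => (1 : ℝ)) y)
        x
      = l *
        (((l ^ m * s₁ ^ (m - 1) * (1 + 2 * r * a) ^ m *
                (l * s₁ * s₂ * (1 + 2 * r * a) - s₁ * s₂) + 1) /
              (l * s₁ * (1 + 2 * r * a) - 1)) / (s₂ * (2 * l - 1)) +
          ((l ^ m * s₁ ^ (m - 1) * (1 + 2 * r * a) ^ m *
                (l * s₁ * s₂ * (1 + 2 * r * a) - s₁ * s₂) + 1) /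
              (l * s₁ * (1 + 2 * r * a) - 1)) *
            (Set.Icc (0 : ℝ) (1 / 2 + r * a)).indicator (fun _ => (1 : ℝ)) x +
          ∑ i ∈ Finset.Icc 1 m, (l * s₁ * (1 + 2 * r * a)) ^ (m - i) *
            (Set.Icc (orbitW s₁ s₂ r a i) (1 / 2 + r * a)).indicator
              (fun _ => (1 : ℝ)) x) := by
  obtain ⟨n, rfl⟩ : ∃ n, m = n + 1 := ⟨m - 1, by omega⟩
  have hs₁0 : (0:ℝ) < s₁ := zero_lt_one.trans hs₁
  have hs₂0 : (0:ℝ) < s₂ := zero_lt_one.trans hs₂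
  have hra0 : 0 < r * a := mul_pos hr ha
  have hA0 : (0:ℝ) < 1 + 2 * r * a := by linarith
  have hhalf : 1/(2*s₁) + 1/(2*s₂) = 1/2 := by field_simp at hsum ⊢; linarith
  have hprod : s₁ + s₂ = s₁ * s₂ := by field_simp at hsum; linarith
  have h2s₂ : (0:ℝ) < 1/(2*s₂) := by positivity
  have h2s₂' : 1/(2*s₂) < 1/2 := by
    rw [div_lt_div_iff₀ (by linarith) (by norm_num)]; linarith
  have h2l : s₂ * (2*l - 1) ≠ 0 := by
    intro h
    rcases mul_eq_zero.mp h with h | h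
    · exact absurd h (ne_of_gt hs₂0)
    · exact hl (by linarith)
  have hLne : l * s₁ * (1 + 2 * r * a) - 1 ≠ 0 := sub_ne_zero.mpr hl'
  have hs₁A : (0:ℝ) < s₁ + 2*r*s₁*a := by nlinarith
  have hs₂A : (0:ℝ) < s₂ + 2*r*s₂*a := by nlinarith
  simp only [Nat.add_sub_cancel] at horbit ⊢
  simp only [phi, Nat.add_sub_cancel] at hphi
  set X := orbitW s₁ s₂ r a with hXdef
  set α₀ : ℝ := (l ^ (n+1) * s₁ ^ n * (1 + 2 * r * a) ^ (n+1) *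
        (l * s₁ * s₂ * (1 + 2 * r * a) - s₁ * s₂) + 1) /
      (l * s₁ * (1 + 2 * r * a) - 1) with hα₀
  set c : ℝ := α₀ / (s₂ * (2 * l - 1)) with hcdef
  clear_value c α₀
  -- orbit facts
  have hXrec : ∀ i : ℕ, 1 ≤ i → X (i+1) = (s₁ + 2*r*s₁*a) * (X i - 1/2 + 1/(2*s₁)) := by
    intro i hi
    obtain ⟨k, rfl⟩ : ∃ k, i = k + 1 := ⟨i - 1, by omega⟩
    simp [hXdef, orbitW]
  have horbitm' : X (n+1) = 1/(2*s₂) := by rw [horbitm]; linarith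
  have hXtop : X (n+2) = 0 := by rw [hXrec (n+1) (by omega), horbitm]; ring
  have hXb : ∀ i : ℕ, 1 ≤ i → i ≤ n+1 → 1/(2*s₂) ≤ X i ∧ X i < 1/2 := by
    intro i h1 h2
    rcases eq_or_lt_of_le h2 with h | h
    · rw [h, horbitm']
      exact ⟨le_refl _, h2s₂'⟩
    · have hh := horbit i h1 (by omega)
      rw [Set.mem_Ico] at hh
      exact ⟨by linarith [hh.1], hh.2⟩
  -- scalar identities
  have hQ : α₀ * (l * s₁ * (1 + 2*r*a) - 1)
      = l^(n+1) * s₁^n * (1+2*r*a)^(n+1) * s₁ * s₂ * (l*(1+2*r*a) - 1) + 1 := by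
    rw [hα₀, div_mul_cancel₀ _ hLne]; ring
  have hcval : c * (s₂ * (2*l - 1)) = α₀ := by
    rw [hcdef, div_mul_cancel₀ _ h2l]
  have hQD : (l^(n+1)*s₁^n*(1+2*r*a)^(n+1)*s₁*s₂*(l*(1+2*r*a)-1)) * (s₂*(2*l-1)*(l*s₁*(1+2*r*a)-1))
      = s₁ * (l^(n+1)*s₁^n*(1+2*r*a)^(n+1)*s₁*s₂*(l*(1+2*r*a)-1)) + s₁ := by
    linear_combination s₁ * hphi
  have hsc : s₁ * c = l^(n+1)*s₁^n*(1+2*r*a)^(n+1)*s₁*s₂*(l*(1+2*r*a)-1) := by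
    apply mul_right_cancel₀ (mul_ne_zero h2l hLne)
    linear_combination s₁*(l * s₁ * (1 + 2*r*a) - 1)*hcval + s₁*hQ - hQD
  have hGmul : (∑ i ∈ Finset.Icc 1 (n+1), (l*s₁*(1+2*r*a))^(n+1-i)) * (l*s₁*(1+2*r*a) - 1)
      = (l*s₁*(1+2*r*a))^(n+1) - 1 := by
    have hre : (∑ i ∈ Finset.Icc 1 (n+1), (l*s₁*(1+2*r*a))^(n+1-i))
        = ∑ j ∈ Finset.range (n+1), (l*s₁*(1+2*r*a))^j := by
      rw [← Finset.Ico_add_one_right_eq_Icc, Finset.sum_Ico_eq_sum_range,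
        ← Finset.sum_range_reflect (fun j => (l*s₁*(1+2*r*a))^j) (n+1)]
      apply Finset.sum_congr (by norm_num) (fun j hj => ?_)
      congr 1
      omega
    rw [hre]
    exact geom_sum_mul _ _
  have hpow2 : (l*s₁*(1+2*r*a))^(n+1) = (l^(n+1)*s₁^n*(1+2*r*a)^(n+1)) * s₁ := by
    rw [mul_pow, mul_pow]; ring
  have hpow3 : l*(1+2*r*a)*(l*s₁*(1+2*r*a))^n = l^(n+1)*s₁^n*(1+2*r*a)^(n+1) := by
    rw [mul_pow, mul_pow, pow_succ, pow_succ]; ring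
  have E0 : 1/(2*s₂) * (c + α₀) + 1/(2*s₁) * c = l * c := by
    rw [one_div, one_div, inv_mul_eq_div, inv_mul_eq_div,
      div_add_div _ _ (by positivity) (by positivity),
      div_eq_iff (by positivity)]
    linear_combination (-2*s₁)*hcval + 2*c*hprod
  have E1 : 1/(s₁ + 2*r*s₁*a) * (c + α₀ + 1) + 1/(s₂ + 2*r*s₂*a) * c = l * α₀ := by
    rw [one_div, one_div, inv_mul_eq_div, inv_mul_eq_div,
      div_add_div _ _ (ne_of_gt hs₁A) (ne_of_gt hs₂A),
      div_eq_iff (by positivity)]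
    linear_combination (-(s₂*(1+2*r*a)))*hQ + (s₂*(1+2*r*a))*hsc + ((1+2*r*a)*c)*hprod
  have E2 : 1/(s₂ + 2*r*s₂*a) * (α₀ + ∑ i ∈ Finset.Icc 1 (n+1), (l*s₁*(1+2*r*a))^(n+1-i))
      = l * (l*s₁*(1+2*r*a))^n := by
    have h1 : α₀ + (∑ i ∈ Finset.Icc 1 (n+1), (l*s₁*(1+2*r*a))^(n+1-i))
        = l * (l*s₁*(1+2*r*a))^n * (s₂ + 2*r*s₂*a) := by
      apply mul_right_cancel₀ hLne
      linear_combination hQ + hGmul + (s₁ + s₂ - l*s₁*s₂*(1+2*r*a)) * hpow3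
        + (l^(n+1)*s₁^n*(1+2*r*a)^(n+1)) * hprod
    rw [h1, one_div, inv_mul_eq_div, mul_div_assoc, div_self (ne_of_gt hs₂A), mul_one]

  -- a.e. reduction
  have h0 : ∀ᵐ x ∂(volume.restrict (Set.Icc (0:ℝ) 1)), x ≠ (0:ℝ) := by
    have hset : {y : ℝ | ¬ y ≠ 0} = {(0:ℝ)} := by ext y; simp
    rw [ae_iff, hset]
    simp
  filter_upwards [ae_restrict_mem measurableSet_Icc, h0] with x hmem hxne
  have hx0' : 0 < x := lt_of_le_of_ne hmem.1 (Ne.symm hxne)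
  have hx1 : x ≤ 1 := hmem.2
  simp only [Pa]
  -- τ₁ facts
  have hτ₁mem : ((1 - x) / (2 * s₂)) ∈ Set.Icc (0:ℝ) (1/2 + r*a) := by
    constructor
    · exact div_nonneg (by linarith) (by linarith)
    · have h5 : (1 - x) / (2*s₂) ≤ 1/(2*s₂) := by gcongr <;> linarith
      linarith
  have hτ₁lt : (1 - x) / (2 * s₂) < 1/(2*s₂) := by
    rw [div_lt_div_iff₀ (by linarith) (by linarith)]
    nlinarith
  have hI1 : (Set.Icc (0:ℝ) (1 / 2 + r * a)).indicator (fun _ => (1:ℝ)) ((1 - x) / (2 * s₂)) = 1 := by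
    rw [Set.indicator_of_mem hτ₁mem]
  have hS1 : (∑ i ∈ Finset.Icc 1 (n+1), (l * s₁ * (1 + 2 * r * a)) ^ (n + 1 - i) *
      (Set.Icc (X i) (1 / 2 + r * a)).indicator (fun _ => (1:ℝ)) ((1 - x) / (2 * s₂))) = 0 := by
    refine Finset.sum_eq_zero (fun i hi => ?_)
    rw [Finset.mem_Icc] at hi
    rw [Set.indicator_of_notMem (fun hm => absurd (Set.mem_Icc.mp hm).1
      (not_le.mpr (lt_of_lt_of_le hτ₁lt (hXb i hi.1 hi.2).1))), mul_zero]
  -- τ₄ facts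
  have hτ₄gt : 1/2 + r*a < (x - 1) / (2 * s₁) + 1 := by
    have h6 : -(1/(2*s₁)) ≤ (x - 1) / (2*s₁) := by
      rw [show -(1/(2*s₁)) = (-1)/(2*s₁) from by ring]
      gcongr <;> linarith
    linarith
  have hI4 : (Set.Icc (0:ℝ) (1 / 2 + r * a)).indicator (fun _ => (1:ℝ)) ((x - 1) / (2 * s₁) + 1) = 0 :=
    Set.indicator_of_notMem (fun hm => absurd (Set.mem_Icc.mp hm).2 (not_le.mpr hτ₄gt)) _
  have hS4 : (∑ i ∈ Finset.Icc 1 (n+1), (l * s₁ * (1 + 2 * r * a)) ^ (n + 1 - i) *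
      (Set.Icc (X i) (1 / 2 + r * a)).indicator (fun _ => (1:ℝ)) ((x - 1) / (2 * s₁) + 1)) = 0 := by
    refine Finset.sum_eq_zero (fun i hi => ?_)
    rw [Set.indicator_of_notMem (fun hm => absurd (Set.mem_Icc.mp hm).2 (not_le.mpr hτ₄gt)), mul_zero]
  rw [hI1, hS1, hI4, hS4]
  by_cases hxle : x ≤ 1/2 + r*a
  case neg =>
    -- x outside I₀
    have hind0 : (Set.Icc (0:ℝ) (1 / 2 + r * a)).indicator (fun _ => (1:ℝ)) x = 0 :=
      Set.indicator_of_notMem (fun hm => hxle (Set.mem_Icc.mp hm).2) _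
    have hSR : (∑ i ∈ Finset.Icc 1 (n+1), (l * s₁ * (1 + 2 * r * a)) ^ (n + 1 - i) *
        (Set.Icc (X i) (1 / 2 + r * a)).indicator (fun _ => (1:ℝ)) x) = 0 := by
      refine Finset.sum_eq_zero (fun i hi => ?_)
      rw [Set.indicator_of_notMem (fun hm => hxle (Set.mem_Icc.mp hm).2), mul_zero]
    rw [hind0, hSR]
    linear_combination E0

  case pos =>
    -- iff translations via the orbit recursion
    have hτ₂iff : ∀ i:ℕ, 1 ≤ i →
        (X i ≤ x / (s₁ + 2*r*s₁*a) + 1/2 - 1/(2*s₁) ↔ X (i+1) ≤ x) := by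
      intro i hi
      rw [hXrec i hi, show (X i ≤ x / (s₁ + 2*r*s₁*a) + 1/2 - 1/(2*s₁)) ↔
        (X i - 1/2 + 1/(2*s₁) ≤ x / (s₁ + 2*r*s₁*a)) from by constructor <;> intro h <;> linarith,
        le_div_iff₀ hs₁A]
      constructor <;> intro h <;> linarith
    have hX1 : X 1 = (s₂ + 2*r*s₂*a) * (1/2 + 1/(2*s₂) - (1/2 + r*a)) := by
      simp [hXdef, orbitW]
    have hτ₃iff : (1/2 + 1/(2*s₂) - x / (s₂ + 2*r*s₂*a) ≤ 1/2 + r*a) ↔ X 1 ≤ x := by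
      rw [hX1, show (1/2 + 1/(2*s₂) - x / (s₂ + 2*r*s₂*a) ≤ 1/2 + r*a) ↔
        (1/2 + 1/(2*s₂) - (1/2 + r*a) ≤ x / (s₂ + 2*r*s₂*a)) from by constructor <;> intro h <;> linarith,
        le_div_iff₀ hs₂A]
      constructor <;> intro h <;> linarith
    -- bounds for τ₂, τ₃
    have hτ₂ub : x / (s₁ + 2*r*s₁*a) + 1/2 - 1/(2*s₁) ≤ 1/2 + r*a := by
      have h5 : x / (s₁ + 2*r*s₁*a) ≤ 1/(2*s₁) := by
        rw [div_le_div_iff₀ hs₁A (by linarith)]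
        nlinarith [mul_le_mul_of_nonneg_left hxle hs₁0.le]
      linarith
    have hτ₂lb : 0 ≤ x / (s₁ + 2*r*s₁*a) + 1/2 - 1/(2*s₁) := by
      have h5 : 0 ≤ x / (s₁ + 2*r*s₁*a) := div_nonneg hx0'.le hs₁A.le
      linarith
    have hτ₃lb : 1/2 ≤ 1/2 + 1/(2*s₂) - x / (s₂ + 2*r*s₂*a) := by
      have h5 : x / (s₂ + 2*r*s₂*a) ≤ 1/(2*s₂) := by
        rw [div_le_div_iff₀ hs₂A (by linarith)]
        nlinarith [mul_le_mul_of_nonneg_left hxle hs₂0.le]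
      linarith
    -- indicator conversions
    have hI2 : (Set.Icc (0:ℝ) (1 / 2 + r * a)).indicator (fun _ => (1:ℝ))
        (x / (s₁ + 2 * r * s₁ * a) + 1 / 2 - 1 / (2 * s₁)) = 1 :=
      Set.indicator_of_mem (Set.mem_Icc.mpr ⟨hτ₂lb, hτ₂ub⟩) _
    have hconv2 : ∀ i:ℕ, 1 ≤ i →
        (Set.Icc (X i) (1 / 2 + r * a)).indicator (fun _ => (1:ℝ))
          (x / (s₁ + 2 * r * s₁ * a) + 1 / 2 - 1 / (2 * s₁))
        = (Set.Icc (X (i+1)) (1 / 2 + r * a)).indicator (fun _ => (1:ℝ)) x := by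
      intro i hi
      by_cases h : X (i+1) ≤ x
      · rw [Set.indicator_of_mem (Set.mem_Icc.mpr ⟨(hτ₂iff i hi).mpr h, hτ₂ub⟩),
          Set.indicator_of_mem (Set.mem_Icc.mpr ⟨h, hxle⟩)]
      · rw [Set.indicator_of_notMem (fun hm => h ((hτ₂iff i hi).mp (Set.mem_Icc.mp hm).1)),
          Set.indicator_of_notMem (fun hm => h (Set.mem_Icc.mp hm).1)]
    have hS2 : (∑ i ∈ Finset.Icc 1 (n+1), (l * s₁ * (1 + 2 * r * a)) ^ (n + 1 - i) *
        (Set.Icc (X i) (1 / 2 + r * a)).indicator (fun _ => (1:ℝ))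
          (x / (s₁ + 2 * r * s₁ * a) + 1 / 2 - 1 / (2 * s₁)))
        = (∑ i ∈ Finset.Icc 2 (n+1), (l * s₁ * (1 + 2 * r * a)) ^ (n + 2 - i) *
          (Set.Icc (X i) (1 / 2 + r * a)).indicator (fun _ => (1:ℝ)) x) + 1 := by
      rw [Finset.sum_congr rfl (fun i hi => by rw [hconv2 i (Finset.mem_Icc.mp hi).1])]
      rw [← Finset.Ico_add_one_right_eq_Icc, Finset.sum_Ico_eq_sum_range,
        show (n+1+1-1) = n+1 from rfl, Finset.sum_range_succ]
      have htop : (l * s₁ * (1 + 2 * r * a)) ^ (n + 1 - (1 + n)) *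
          (Set.Icc (X (1 + n + 1)) (1 / 2 + r * a)).indicator (fun _ => (1:ℝ)) x = 1 := by
        rw [show n+1-(1+n) = 0 from by omega, pow_zero, one_mul,
          show 1+n+1 = n+2 from by omega, hXtop]
        exact Set.indicator_of_mem (Set.mem_Icc.mpr ⟨hx0'.le, hxle⟩) _
      rw [htop]
      congr 1
      rw [← Finset.Ico_add_one_right_eq_Icc, Finset.sum_Ico_eq_sum_range,
        show (n+1+1-2) = n from rfl]
      refine Finset.sum_congr rfl (fun k hk => ?_)
      rw [show n+1-(1+k) = n+2-(2+k) from by omega, show 1+k+1 = 2+k from by omega]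
    have hconv3 : ∀ u:ℝ, u < 1/2 →
        (Set.Icc u (1 / 2 + r * a)).indicator (fun _ => (1:ℝ))
          (1 / 2 + 1 / (2 * s₂) - x / (s₂ + 2 * r * s₂ * a))
        = (Set.Icc (X 1) (1 / 2 + r * a)).indicator (fun _ => (1:ℝ)) x := by
      intro u hu
      by_cases h : X 1 ≤ x
      · rw [Set.indicator_of_mem (Set.mem_Icc.mpr ⟨by linarith, hτ₃iff.mpr h⟩),
          Set.indicator_of_mem (Set.mem_Icc.mpr ⟨h, hxle⟩)]
      · rw [Set.indicator_of_notMem (fun hm => h (hτ₃iff.mp (Set.mem_Icc.mp hm).2)),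
          Set.indicator_of_notMem (fun hm => h (Set.mem_Icc.mp hm).1)]
    have hI3 : (Set.Icc (0:ℝ) (1 / 2 + r * a)).indicator (fun _ => (1:ℝ))
        (1 / 2 + 1 / (2 * s₂) - x / (s₂ + 2 * r * s₂ * a))
        = (Set.Icc (X 1) (1 / 2 + r * a)).indicator (fun _ => (1:ℝ)) x :=
      hconv3 0 (by norm_num)
    have hS3 : (∑ i ∈ Finset.Icc 1 (n+1), (l * s₁ * (1 + 2 * r * a)) ^ (n + 1 - i) *
        (Set.Icc (X i) (1 / 2 + r * a)).indicator (fun _ => (1:ℝ))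
          (1 / 2 + 1 / (2 * s₂) - x / (s₂ + 2 * r * s₂ * a)))
        = (∑ i ∈ Finset.Icc 1 (n+1), (l * s₁ * (1 + 2 * r * a)) ^ (n + 1 - i)) *
          (Set.Icc (X 1) (1 / 2 + r * a)).indicator (fun _ => (1:ℝ)) x := by
      rw [Finset.sum_mul]
      refine Finset.sum_congr rfl (fun i hi => ?_)
      rw [Finset.mem_Icc] at hi
      rw [hconv3 (X i) (hXb i hi.1 hi.2).2, mul_assoc]
    have hind0x : (Set.Icc (0:ℝ) (1 / 2 + r * a)).indicator (fun _ => (1:ℝ)) x = 1 :=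
      Set.indicator_of_mem (Set.mem_Icc.mpr ⟨hx0'.le, hxle⟩) _
    have hRsplit : (∑ i ∈ Finset.Icc 1 (n+1), (l * s₁ * (1 + 2 * r * a)) ^ (n + 1 - i) *
        (Set.Icc (X i) (1 / 2 + r * a)).indicator (fun _ => (1:ℝ)) x)
        = (l * s₁ * (1 + 2 * r * a)) ^ n *
            (Set.Icc (X 1) (1 / 2 + r * a)).indicator (fun _ => (1:ℝ)) x
          + ∑ i ∈ Finset.Icc 2 (n+1), (l * s₁ * (1 + 2 * r * a)) ^ (n + 1 - i) *
            (Set.Icc (X i) (1 / 2 + r * a)).indicator (fun _ => (1:ℝ)) x := by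
      rw [show Finset.Icc 1 (n+1) = insert 1 (Finset.Icc 2 (n+1)) from by
          ext k; simp only [Finset.mem_Icc, Finset.mem_insert]; omega,
        Finset.sum_insert (by simp [Finset.mem_Icc])]
      norm_num
    have E3 : 1/(s₁ + 2*r*s₁*a) * (∑ i ∈ Finset.Icc 2 (n+1), (l * s₁ * (1 + 2 * r * a)) ^ (n + 2 - i) *
          (Set.Icc (X i) (1 / 2 + r * a)).indicator (fun _ => (1:ℝ)) x)
        = l * (∑ i ∈ Finset.Icc 2 (n+1), (l * s₁ * (1 + 2 * r * a)) ^ (n + 1 - i) *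
          (Set.Icc (X i) (1 / 2 + r * a)).indicator (fun _ => (1:ℝ)) x) := by
      rw [Finset.mul_sum, Finset.mul_sum]
      refine Finset.sum_congr rfl (fun i hi => ?_)
      rw [Finset.mem_Icc] at hi
      rw [show n+2-i = (n+1-i)+1 from by omega, pow_succ]
      field_simp
    rw [hI2, hS2, hI3, hS3, hind0x, hRsplit]
    linear_combination E0 + E1 +
      ((Set.Icc (X 1) (1 / 2 + r * a)).indicator (fun _ => (1:ℝ)) x) * E2 + E3
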